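/- arXiv:2205.13241 — 5 statements merged into one kernel-verified Lean document; each statement's English description precedes it below -/
import Mathlib

section
/- An R-module M is I-reduced if and only if I·Γ_I(M) = 0, where Γ_I(M) is the I-torsion submodule of M. -/
theorem stmt3 (R : Type*) [CommRing R] (I : Ideal R)
    (M : Type*) [AddCommGroup M] [Module R M] :
    Submodule.torsionBySet R M (I : Set R) =
        Submodule.torsionBySet R M ((I ^ 2 : Ideal R) : Set R) ↔
      I • (⨆ k : ℕ, Submodule.torsionBySet R M ((I ^ (k + 1) : Ideal R) : Set R)) = ⊥ := by
  constructor
  · intro h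
    -- all torsionBySet (I^(k+1)) equal torsionBySet I
    have key : ∀ k : ℕ, Submodule.torsionBySet R M ((I ^ (k + 1) : Ideal R) : Set R)
        = Submodule.torsionBySet R M (I : Set R) := by
      intro k
      induction k with
      | zero => simp
      | succ n ih =>
        apply le_antisymm
        · intro m hm
          -- show m ∈ torsion I² = torsion I
          rw [h]
          rw [Submodule.mem_torsionBySet_iff] at hm ⊢
          rintro ⟨a, ha⟩
          have ha' : a ∈ (I : Ideal R) ^ 2 := ha
          rw [pow_two] at ha'
          suffices hsuf : ∀ c ∈ (I : Ideal R) * I, c • m = 0 from hsuf a ha'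
          intro c hc
          refine Submodule.mul_induction_on hc ?_ ?_
          · intro x hx y hy
            have hy' : y • m ∈ Submodule.torsionBySet R M ((I ^ (n + 1) : Ideal R) : Set R) := by
              rw [Submodule.mem_torsionBySet_iff]
              rintro ⟨b, hb⟩
              have : (b * y) ∈ (I ^ (n + 1 + 1) : Ideal R) := by
                rw [pow_succ]
                exact Ideal.mul_mem_mul hb hy
              have := hm ⟨b * y, this⟩
              simpa [mul_smul] using this
            rw [ih, Submodule.mem_torsionBySet_iff] at hy'
            have := hy' ⟨x, hx⟩
            simpa [mul_smul] using this
          · intro x y hx hy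
            -- here hx hy : x • m = 0 etc, need (x+y) • m = 0
            simp [add_smul, hx, hy]
        · intro m hm
          rw [Submodule.mem_torsionBySet_iff] at hm ⊢
          rintro ⟨a, ha⟩
          have ha' : a ∈ (I : Ideal R) := by
            have hle : (I : Ideal R) ^ (n + 1 + 1) ≤ I := Ideal.pow_le_self (by omega)
            exact hle ha
          exact hm ⟨a, ha'⟩
    have hsup : (⨆ k : ℕ, Submodule.torsionBySet R M ((I ^ (k + 1) : Ideal R) : Set R))
        = Submodule.torsionBySet R M (I : Set R) := by
      simp [key]
    rw [hsup, eq_bot_iff]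
    intro x hx
    refine Submodule.smul_induction_on hx ?_ ?_
    · intro r hr m hm
      rw [Submodule.mem_torsionBySet_iff] at hm
      exact hm ⟨r, hr⟩
    · intro x y hx hy
      simpa using add_mem hx hy
  · intro h
    apply le_antisymm
    · apply Submodule.torsionBySet_le_torsionBySet_of_subset
      have : (I : Ideal R) ^ 2 ≤ I := Ideal.pow_le_self (by omega)
      exact this
    · intro m hm
      have hmem : m ∈ ⨆ k : ℕ, Submodule.torsionBySet R M ((I ^ (k + 1) : Ideal R) : Set R) :=
        Submodule.mem_iSup_of_mem 1 hm
      rw [Submodule.mem_torsionBySet_iff]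
      rintro ⟨a, ha⟩
      have : a • m ∈ I • (⨆ k : ℕ, Submodule.torsionBySet R M ((I ^ (k + 1) : Ideal R) : Set R)) :=
        Submodule.smul_mem_smul ha hmem
      rw [h] at this
      simpa using this
end

section
/- If M is an I-coreduced R-module (IM = I^2M) and N is any R-module, then the R-module Hom_R(M, N) is I-reduced, i.e., (0 :_{Hom_R(M,N)} I) = (0 :_{Hom_R(M,N)} I^2). -/
theorem stmt7 (R : Type*) [CommRing R] (I : Ideal R)
    (M : Type*) [AddCommGroup M] [Module R M]
    (N : Type*) [AddCommGroup N] [Module R N]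
    (hM : I • (⊤ : Submodule R M) = (I ^ 2 : Ideal R) • (⊤ : Submodule R M)) :
    Submodule.torsionBySet R (M →ₗ[R] N) (I : Set R) =
      Submodule.torsionBySet R (M →ₗ[R] N) ((I ^ 2 : Ideal R) : Set R) := by
  ext f
  simp only [Submodule.mem_torsionBySet_iff, Subtype.forall, SetLike.mem_coe]
  constructor
  · intro h a ha
    exact h a (Ideal.pow_le_self two_ne_zero ha)
  · intro h a ha
    ext x
    have hx : a • x ∈ (I ^ 2 : Ideal R) • (⊤ : Submodule R M) := by
      rw [← hM]
      exact Submodule.smul_mem_smul ha trivial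
    have key : ∀ m ∈ (I ^ 2 : Ideal R) • (⊤ : Submodule R M), f m = 0 := by
      intro m hm
      refine Submodule.smul_induction_on hm ?_ ?_
      · intro b hb y _
        have := congrFun (congrArg DFunLike.coe (h b hb)) y
        simpa [LinearMap.map_smul] using this
      · intro m₁ m₂ h1 h2
        simp [h1, h2]
    have : f (a • x) = 0 := key _ hx
    simpa [LinearMap.map_smul] using this
end

section
/- Let N be an injective cogenerator of the category of R-modules. If Hom_R(M, N) is I-reduced, then M is I-coreduced. -/
theorem stmt8 (R : Type*) [CommRing R] (I : Ideal R)
    (M : Type u) [AddCommGroup M] [Module R M]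
    (N : Type u) [AddCommGroup N] [Module R N]
    (hinj : Module.Injective R N)
    (hcogen : ∀ (A : Type u) [AddCommGroup A] [Module R A] (a : A),
      a ≠ 0 → ∃ g : A →ₗ[R] N, g a ≠ 0)
    (hred : Submodule.torsionBySet R (M →ₗ[R] N) (I : Set R) =
      Submodule.torsionBySet R (M →ₗ[R] N) ((I ^ 2 : Ideal R) : Set R)) :
    I • (⊤ : Submodule R M) = (I ^ 2 : Ideal R) • (⊤ : Submodule R M) := by
  refine le_antisymm ?_ (Submodule.smul_mono (Ideal.pow_le_self two_ne_zero) le_rfl)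
  intro m hm
  by_contra hm2
  set P := (I ^ 2 : Ideal R) • (⊤ : Submodule R M) with hP
  have hmk : (Submodule.Quotient.mk m : M ⧸ P) ≠ 0 := by
    simpa [Submodule.Quotient.mk_eq_zero] using hm2
  obtain ⟨g, hg⟩ := hcogen (M ⧸ P) _ hmk
  set f : M →ₗ[R] N := g.comp P.mkQ with hf
  have hf2 : f ∈ Submodule.torsionBySet R (M →ₗ[R] N) ((I ^ 2 : Ideal R) : Set R) := by
    rw [Submodule.mem_torsionBySet_iff]
    rintro ⟨a, ha⟩
    ext x
    have hx : a • x ∈ P := Submodule.smul_mem_smul ha trivial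
    show a • g (Submodule.Quotient.mk x) = 0
    rw [← map_smul, ← Submodule.Quotient.mk_smul, (Submodule.Quotient.mk_eq_zero P).mpr hx,
      map_zero]
  have hf1 : f ∈ Submodule.torsionBySet R (M →ₗ[R] N) (I : Set R) := hred ▸ hf2
  rw [Submodule.mem_torsionBySet_iff] at hf1
  have hfm : f m = 0 := by
    refine Submodule.smul_induction_on hm (fun a ha x _ => ?_) (fun x y hx hy => ?_)
    · have := congrArg (fun (h : M →ₗ[R] N) => h x) (hf1 ⟨a, ha⟩)
      simpa using this
    · simp [map_add, hx, hy]
  exact hg (by simpa [hf] using hfm)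
end

section
/- If M is an S-R-bimodule which is J-coreduced as an S-module (JM = J^2M) for an ideal J of S, then for any R-module N, the S-module M ⊗_R N is J-coreduced. -/
open TensorProduct

/-!
Coreducedness `I • ⊤ = I' • ⊤` passes to the image of any linear map, since `map f (I • ⊤) = I • map f ⊤`,
and hence to any module that is the sum of images of `M`. As an `S`-module, `M ⊗[R] N` is the sum over
`n : N` of the images of `m ↦ m ⊗ₜ n`.
-/

namespace Submodule

variable {S M P : Type*} [CommSemiring S] [AddCommMonoid M] [Module S M] [AddCommMonoid P]
  [Module S P]
  {I I' : Ideal S}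

theorem smul_range_eq_of_smul_top_eq (f : M →ₗ[S] P) (h : I • (⊤ : Submodule S M) = I' • ⊤) :
    I • LinearMap.range f = I' • LinearMap.range f := by
  rw [← map_top, ← map_smul'', h, map_smul'']

theorem smul_top_eq_of_iSup_range_eq_top {ι : Type*} (f : ι → M →ₗ[S] P)
    (hf : ⨆ i, LinearMap.range (f i) = ⊤) (h : I • (⊤ : Submodule S M) = I' • ⊤) :
    I • (⊤ : Submodule S P) = I' • ⊤ := by
  simp only [← hf, smul_iSup, smul_range_eq_of_smul_top_eq _ h]

end Submodule

namespace TensorProduct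

variable (R S : Type*) [CommSemiring R] [Semiring S] {M N : Type*} [AddCommMonoid M] [Module R M]
  [Module S M] [SMulCommClass R S M] [AddCommMonoid N] [Module R N]

def tmulRight (n : N) : M →ₗ[S] M ⊗[R] N where
  toFun m := m ⊗ₜ n
  map_add' m m' := add_tmul m m' n
  map_smul' s m := (smul_tmul' s m n).symm

theorem iSup_range_tmulRight_eq_top :
    ⨆ n : N, LinearMap.range (tmulRight R S (M := M) n) = ⊤ := by
  refine Submodule.eq_top_iff'.mpr fun x => ?_
  induction x using TensorProduct.induction_on with
  | zero => exact zero_mem _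
  | tmul m n => exact Submodule.mem_iSup_of_mem n ⟨m, rfl⟩
  | add x y hx hy => exact add_mem hx hy

end TensorProduct

theorem stmt9_general (R S : Type*) [CommRing R] [CommRing S] (J : Ideal S)
    (M : Type*) [AddCommGroup M] [Module R M] [Module S M]
    [SMulCommClass R S M]
    (N : Type*) [AddCommGroup N] [Module R N]
    (hM : J • (⊤ : Submodule S M) = (J ^ 2 : Ideal S) • (⊤ : Submodule S M)) :
    J • (⊤ : Submodule S (M ⊗[R] N)) =
      (J ^ 2 : Ideal S) • (⊤ : Submodule S (M ⊗[R] N)) :=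
  Submodule.smul_top_eq_of_iSup_range_eq_top _ (TensorProduct.iSup_range_tmulRight_eq_top R S) hM

theorem stmt9 (R S : Type*) [CommRing R] [CommRing S] (J : Ideal S)
    (M : Type*) [AddCommGroup M] [Module R M] [Module S M]
    [SMulCommClass R S M] [SMulCommClass S R M]
    (N : Type*) [AddCommGroup N] [Module R N]
    (hM : J • (⊤ : Submodule S M) = (J ^ 2 : Ideal S) • (⊤ : Submodule S M)) :
    J • (⊤ : Submodule S (M ⊗[R] N)) =
      (J ^ 2 : Ideal S) • (⊤ : Submodule S (M ⊗[R] N)) :=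
  stmt9_general R S J M N hM
end

section
/- If (M_k) is a direct system of I-coreduced R-modules, then the direct limit lim→ M_k is I-coreduced. -/
theorem stmt16 (R : Type*) [CommRing R] (I : Ideal R)
    {ι : Type*} [Preorder ι] [IsDirected ι (· ≤ ·)] [DecidableEq ι]
    (G : ι → Type*) [∀ i, AddCommGroup (G i)] [∀ i, Module R (G i)]
    (f : ∀ i j, i ≤ j → G i →ₗ[R] G j)
    (hcor : ∀ i, I • (⊤ : Submodule R (G i)) =
      (I ^ 2 : Ideal R) • (⊤ : Submodule R (G i))) :
    I • (⊤ : Submodule R (Module.DirectLimit G f)) =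
      (I ^ 2 : Ideal R) • (⊤ : Submodule R (Module.DirectLimit G f)) := by
  refine le_antisymm ?_ (Submodule.smul_mono_left (Ideal.pow_le_self two_ne_zero))
  intro x hx
  refine Submodule.smul_induction_on hx ?_ (fun y z hy hz => Submodule.add_mem _ hy hz)
  intro a ha m _
  cases isEmpty_or_nonempty ι with
  | inl h =>
    haveI : Subsingleton (DirectSum ι G) :=
      ⟨fun a b => DFinsupp.ext fun i => h.elim i⟩
    haveI : Subsingleton (Module.DirectLimit G f) := by
      unfold Module.DirectLimit
      exact ⟨fun a b => Quotient.inductionOn₂' a b fun x y =>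
        congrArg _ (Subsingleton.elim x y)⟩
    rw [Subsingleton.elim (a • m) 0]
    exact Submodule.zero_mem _
  | inr h =>
    obtain ⟨i, y, rfl⟩ := Module.DirectLimit.exists_of m
    rw [← map_smul]
    have hy : a • y ∈ (I ^ 2 : Ideal R) • (⊤ : Submodule R (G i)) := by
      rw [← hcor i]; exact Submodule.smul_mem_smul ha trivial
    have := Submodule.mem_map_of_mem (f := Module.DirectLimit.of R ι G f i) hy
    rw [Submodule.map_smul''] at this
    exact Submodule.smul_mono le_rfl le_top this
end
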